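/- At the interior Nash equilibrium under uniform price p, the total demand is X(p) = Σ_j x_j* = (N−1)/(p·C) where C = Σ_j 1/a_j, so the ESP's profit Π(p) = (p − cT)·X(p) = ((p − cT)/p)·(N−1)/C satisfies dΠ/dp = (cT/p²)·(N−1)/C > 0 and d²Π/dp² = −(2cT/p³)·(N−1)/C < 0 for p > 0. -/

import Mathlib

/-! The profit is `Π(q) = (1 - cT/q) · K` with the positive constant `K = (N - 1)/C`, so
`Π' = cT/q² · K > 0` and `Π'' = -2cT/q³ · K < 0`: the sign of each derivative is that of `cT`
and of a power of `p > 0`. -/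

theorem hasDerivAt_sub_const_div_self (k : ℝ) {p : ℝ} (hp : p ≠ 0) :
    HasDerivAt (fun q => (q - k) / q) (k / p ^ 2) p := by
  refine (((hasDerivAt_id p).sub_const k).fun_div (hasDerivAt_id p) hp).congr_deriv ?_
  simp only [id]
  field_simp
  ring

theorem hasDerivAt_const_div_sq (k : ℝ) {p : ℝ} (hp : p ≠ 0) :
    HasDerivAt (fun q => k / q ^ 2) (-(2 * k / p ^ 3)) p := by
  have hsq : HasDerivAt (fun q : ℝ => q ^ 2) (2 * p) p := by
    simpa using hasDerivAt_pow 2 p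
  refine ((hasDerivAt_const p k).fun_div hsq (pow_ne_zero 2 hp)).congr_deriv ?_
  field_simp
  ring

theorem sum_one_div_pos {ι : Type*} [Fintype ι] [Nonempty ι] {a : ι → ℝ} (ha : ∀ i, 0 < a i) :
    0 < ∑ i, 1 / a i :=
  Finset.sum_pos (fun i _ => one_div_pos.mpr (ha i)) Finset.univ_nonempty

theorem sub_one_div_sum_one_div_pos {N : ℕ} (hN : 2 ≤ N) {a : Fin N → ℝ} (ha : ∀ i, 0 < a i) :
    0 < ((N : ℝ) - 1) / ∑ j, 1 / a j := by
  have : Nonempty (Fin N) := Fin.pos_iff_nonempty.mp (by omega)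
  have hN1 : (2 : ℝ) ≤ N := by exact_mod_cast hN
  exact div_pos (by linarith) (sum_one_div_pos ha)

open Finset in
/-- Under uniform pricing, with C = Σ_j 1/a_j, equilibrium total demand X(p) = (N−1)/(p·C),
the ESP profit Π(p) = ((p−cT)/p)·(N−1)/C has Π'(p) = (cT/p²)·(N−1)/C > 0 and
Π''(p) = −(2cT/p³)·(N−1)/C < 0 for p > 0. -/
theorem uniform_profit_derivatives (N : ℕ) (hN : 2 ≤ N)
    (a : Fin N → ℝ) (ha : ∀ i, 0 < a i) (c T : ℝ) (hc : 0 < c) (hT : 0 < T)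
    (p : ℝ) (hp : 0 < p) :
    HasDerivAt (fun q => ((q - c * T) / q) * (((N : ℝ) - 1) / ∑ j, 1 / a j))
      ((c * T / p ^ 2) * (((N : ℝ) - 1) / ∑ j, 1 / a j)) p ∧
    0 < (c * T / p ^ 2) * (((N : ℝ) - 1) / ∑ j, 1 / a j) ∧
    HasDerivAt (fun q => (c * T / q ^ 2) * (((N : ℝ) - 1) / ∑ j, 1 / a j))
      (-(2 * c * T / p ^ 3) * (((N : ℝ) - 1) / ∑ j, 1 / a j)) p ∧
    -(2 * c * T / p ^ 3) * (((N : ℝ) - 1) / ∑ j, 1 / a j) < 0 := by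
  have hK := sub_one_div_sum_one_div_pos hN ha
  have hcT : 0 < c * T := mul_pos hc hT
  refine ⟨(hasDerivAt_sub_const_div_self (c * T) hp.ne').mul_const _, by positivity, ?_, ?_⟩
  · simpa only [mul_assoc] using (hasDerivAt_const_div_sq (c * T) hp.ne').mul_const _
  · have : 0 < 2 * c * T / p ^ 3 := by positivity
    exact mul_neg_of_neg_of_pos (neg_neg_of_pos this) hK
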